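/- arXiv:2208.03258 — 5 statements merged into one kernel-verified Lean document; each statement's English description precedes it below -/
import Mathlib

section
/- For every natural number m ≥ 1, there exists a convex set A ⊆ ℝ of cardinality 2m and a non-zero real number d ∈ A - A such that r_{A-A}(d) ≥ m. -/
open Pointwise

/-- A finite set `A`, written in increasing order as `a_1 < a_2 < ... < a_n`,
is convex if `a_i - a_{i-1} < a_{i+1} - a_i` for all `2 ≤ i ≤ n-1`. -/
def IsConvexSet {α : Type*} [LinearOrder α] [Sub α] (A : Finset α) : Prop :=
  ∀ (i : ℕ) (h : i + 2 < (A.sort (· ≤ ·)).length),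
    (A.sort (· ≤ ·)).get ⟨i + 1, by omega⟩ - (A.sort (· ≤ ·)).get ⟨i, by omega⟩ <
      (A.sort (· ≤ ·)).get ⟨i + 2, h⟩ - (A.sort (· ≤ ·)).get ⟨i + 1, by omega⟩

/-- The representation function `r_{A-A}(d) = |{(a,b) ∈ A × A : a - b = d}|`. -/
def repDiff {α : Type*} [DecidableEq α] [Sub α] (A : Finset α) (d : α) : ℕ :=
  ((A ×ˢ A).filter fun p => p.1 - p.2 = d).card

noncomputable def gg (m : ℕ) : ℕ → ℝ
  | j =>
    if j ≤ m then ((m : ℝ) + j)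
    else if h2 : j ≤ 2*m - 1 then gg m (2*(j-m)-1) + gg m (2*(j-m))
    else 0
  termination_by j => j
  decreasing_by all_goals omega

lemma gg_le {m j : ℕ} (h : j ≤ m) : gg m j = (m : ℝ) + j := by
  rw [gg]; simp [h]

lemma gg_rec {m j : ℕ} (h : m < j) (h2 : j ≤ 2*m - 1) :
    gg m j = gg m (2*(j-m)-1) + gg m (2*(j-m)) := by
  rw [gg]; simp [Nat.not_le.2 h, h2]

lemma gg_pos (m : ℕ) : ∀ j, 1 ≤ j → j ≤ 2*m - 1 → 0 < gg m j := by
  intro j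
  induction j using Nat.strong_induction_on with
  | _ j ih =>
    intro h1 h2
    rcases le_or_gt j m with hj | hj
    · rw [gg_le hj]; positivity
    · rw [gg_rec hj h2]
      have ha := ih (2*(j-m)-1) (by omega) (by omega) (by omega)
      have hb := ih (2*(j-m)) (by omega) (by omega) (by omega)
      linarith

lemma gg_mono (m : ℕ) : ∀ j, 1 ≤ j → j + 1 ≤ 2*m - 1 → gg m j < gg m (j+1) := by
  intro j
  induction j using Nat.strong_induction_on with
  | _ j ih =>
    intro h1 h2
    rcases le_or_gt (j+1) m with hj | hj
    · rw [gg_le hj, gg_le (by omega)]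
      push_cast; linarith
    · rcases eq_or_lt_of_le (Nat.succ_le_of_lt hj) with hj' | hj'
      · -- j + 1 = m + 1, i.e. j = m
        have hjm : j = m := by omega
        rw [hjm, gg_le le_rfl, gg_rec (by omega) (by omega)]
        have e1 : 2*((m+1)-m)-1 = 1 := by omega
        have e2 : 2*((m+1)-m) = 2 := by omega
        rw [e1, e2, gg_le (by omega : 1 ≤ m), gg_le (by omega : 2 ≤ m)]
        push_cast; linarith
      · -- m < j
        rw [gg_rec (by omega) (by omega), gg_rec (by omega) h2]
        set k := j - m with hk
        have e1 : 2*((j+1)-m) = 2*k+2 := by omega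
        have e2 : 2*((j+1)-m)-1 = 2*k+1 := by omega
        have e3 : 2*(j-m) = 2*k := by omega
        have e4 : 2*(j-m)-1 = 2*k-1 := by omega
        rw [e2, e1, e4, e3]
        have hk1 : 1 ≤ k := by omega
        have ha := ih (2*k-1) (by omega) (by omega) (by omega)
        have hb := ih (2*k) (by omega) (by omega) (by omega)
        have hd := ih (2*k+1) (by omega) (by omega) (by omega)
        have hc : 2*k-1+1 = 2*k := by omega
        rw [hc] at ha
        linarith

noncomputable def aa (m : ℕ) (i : ℕ) : ℝ := ∑ t ∈ Finset.range i, gg m (t+1)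

lemma aa_succ (m i : ℕ) : aa m (i+1) = aa m i + gg m (i+1) := by
  simp [aa, Finset.sum_range_succ]

lemma aa_strictMono (m : ℕ) : ∀ i j, i < j → j ≤ 2*m - 1 → aa m i < aa m j := by
  intro i j hij hj
  induction j with
  | zero => omega
  | succ n ihn =>
    rw [aa_succ]
    have hg : 0 < gg m (n+1) := gg_pos m (n+1) (by omega) (by omega)
    rcases eq_or_lt_of_le (Nat.lt_succ_iff.mp hij) with h | h
    · subst h; linarith
    · have := ihn h (by omega); linarith

lemma aa_key (m : ℕ) (hm : 1 ≤ m) : ∀ k, k < m → aa m (m+k) = aa m (2*k) + aa m m := by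
  intro k
  induction k with
  | zero => intro _; simp [aa]
  | succ k ihk =>
    intro hk
    have hkm : k < m := by omega
    have e0 : m + (k+1) = (m+k) + 1 := by omega
    rw [e0, aa_succ, ihk hkm]
    have e1 : 2*(k+1) = (2*k+1)+1 := by omega
    rw [e1, aa_succ, show 2*k+1 = (2*k)+1 from rfl, aa_succ]
    have hrec : gg m (m+k+1) = gg m (2*k+1) + gg m (2*k+2) := by
      have := gg_rec (m := m) (j := m+k+1) (by omega) (by omega)
      rw [this, show 2*((m+k+1)-m)-1 = 2*k+1 by omega, show 2*((m+k+1)-m) = 2*k+2 by omega]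
    rw [hrec]
    ring


lemma aa_zero (m : ℕ) : aa m 0 = 0 := by simp [aa]


/-- For every `m ≥ 1` there is a convex set `A ⊆ ℝ` with `|A| = 2m` and a
nonzero `d ∈ A - A` with `r_{A-A}(d) ≥ m`. -/
theorem convex_set_with_rich_difference (m : ℕ) (hm : 1 ≤ m) :
    ∃ A : Finset ℝ, IsConvexSet A ∧ A.card = 2 * m ∧
      ∃ d : ℝ, d ≠ 0 ∧ d ∈ A - A ∧ m ≤ repDiff A d := by
  have hmono : ∀ i j : ℕ, i < j → j < 2*m → aa m i < aa m j := by
    intro i j hij hj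
    exact aa_strictMono m i j hij (by omega)
  set L : List ℝ := (List.range (2*m)).map (aa m) with hLdef
  have hLlen : L.length = 2*m := by simp [hLdef]
  have hLget : ∀ (i : ℕ) (hi : i < L.length), L.get ⟨i, hi⟩ = aa m i := by
    intro i hi
    simp [hLdef]
  have hsorted : L.Pairwise (· ≤ ·) := by
    rw [List.pairwise_iff_get]
    intro i j hij
    rw [hLget i i.isLt, hLget j j.isLt]
    exact le_of_lt (hmono i j hij (by have := j.isLt; omega))
  have hnodup : L.Nodup := by
    refine List.Nodup.map_on ?_ List.nodup_range
    intro x hx y hy hxy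
    simp only [List.mem_range] at hx hy
    by_contra hne
    rcases Nat.lt_or_ge x y with h | h
    · exact absurd hxy (ne_of_lt (hmono x y h hy))
    · have hyx : y < x := by omega
      exact absurd hxy.symm (ne_of_lt (hmono y x hyx hx))
  refine ⟨L.toFinset, ?_, ?_, aa m m, ?_, ?_, ?_⟩
  case _ =>
    -- convexity
    have hsort : L.toFinset.sort (· ≤ ·) = L := (List.toFinset_sort _ hnodup).2 hsorted
    have eg : ∀ (j : ℕ) (hj : j < (Finset.sort L.toFinset (· ≤ ·)).length),
        (Finset.sort L.toFinset (· ≤ ·)).get ⟨j, hj⟩ = aa m j := by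
      intro j hj
      rw [List.get_of_eq hsort]
      exact hLget j _
    intro i h
    rw [eg, eg, eg]
    have h' : i + 2 < L.length := by rw [← hsort]; simpa using h
    have e1 : aa m (i+1) = aa m i + gg m (i+1) := aa_succ m i
    have e2 : aa m (i+2) = aa m (i+1) + gg m (i+2) := by
      have := aa_succ m (i+1)
      rwa [show i+1+1 = i+2 by omega] at this
    have hgg : gg m (i+1) < gg m (i+2) := by
      apply gg_mono m (i+1) (by omega) (by rw [hLlen] at h'; omega)
    rw [e2, e1]
    linarith
  case _ =>
    rw [List.toFinset_card_of_nodup hnodup, hLlen]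
  case _ =>
    have : aa m 0 < aa m m := hmono 0 m hm (by omega)
    rw [aa_zero] at this
    exact ne_of_gt this
  case _ =>
    rw [Finset.mem_sub]
    refine ⟨aa m m, ?_, aa m 0, ?_, by rw [aa_zero]; ring⟩
    · simp only [List.mem_toFinset, hLdef, List.mem_map]
      exact ⟨m, by simp; omega, rfl⟩
    · simp only [List.mem_toFinset, hLdef, List.mem_map]
      exact ⟨0, by simp; omega, rfl⟩
  case _ =>
    rw [repDiff]
    have hle := Finset.card_le_card_of_injOn
      (s := Finset.range m)
      (t := (L.toFinset ×ˢ L.toFinset).filter fun p => p.1 - p.2 = aa m m)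
      (fun k => (aa m (m+k), aa m (2*k))) ?_ ?_
    · simpa using hle
    · intro k hk
      rw [Finset.mem_coe, Finset.mem_range] at hk
      rw [Finset.mem_coe, Finset.mem_filter, Finset.mem_product]
      refine ⟨⟨?_, ?_⟩, ?_⟩
      · simp only [List.mem_toFinset, hLdef, List.mem_map]
        exact ⟨m+k, by simp; omega, rfl⟩
      · simp only [List.mem_toFinset, hLdef, List.mem_map]
        exact ⟨2*k, by simp; omega, rfl⟩
      · have := aa_key m hm k hk
        simp only
        rw [this]; ring
    · intro k1 h1 k2 h2 heq
      rw [Finset.coe_range, Set.mem_Iio] at h1 h2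
      have h1' : aa m (m+k1) = aa m (m+k2) := congrArg Prod.fst heq
      by_contra hne
      rcases Nat.lt_or_ge k1 k2 with h | h
      · exact absurd h1' (ne_of_lt (hmono (m+k1) (m+k2) (by omega) (by omega)))
      · have : k2 < k1 := by omega
        exact absurd h1'.symm (ne_of_lt (hmono (m+k2) (m+k1) (by omega) (by omega)))
end

section
/- For any convex set A ⊂ ℝ and any real number d ≠ 0, the number of representations of d as a difference of two elements of A satisfies r_{A-A}(d) ≤ ⌊|A|/2⌋. -/
lemma gap_mono (n : ℕ) (a : ℕ → ℝ)
    (hconv : ∀ i, i + 2 < n → a (i+1) - a i < a (i+2) - a (i+1)) :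
    ∀ i j, i < j → j + 1 < n → a (i+1) - a i < a (j+1) - a j := by
  intro i j hij hj
  induction j with
  | zero => omega
  | succ m ih =>
    have hstep : a (m+1) - a m < a (m+2) - a (m+1) := hconv m (by omega)
    rcases Nat.lt_or_ge i m with h | h
    · have h1 := ih h (by omega)
      show a (i+1) - a i < a (m+2) - a (m+1)
      linarith
    · obtain rfl : i = m := by omega
      show a (i+1) - a i < a (i+2) - a (i+1)
      exact hstep

lemma diff_shift (n : ℕ) (a : ℕ → ℝ)
    (hconv : ∀ i, i + 2 < n → a (i+1) - a i < a (i+2) - a (i+1)) :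
    ∀ L, 1 ≤ L → ∀ j, j + L + 1 < n → a (j+L) - a j < a (j+1+L) - a (j+1) := by
  intro L hL
  induction L, hL using Nat.le_induction with
  | base => intro j hj; exact gap_mono n a hconv j (j+1) (by omega) (by omega)
  | succ L hL ih =>
    intro j hj
    have h1 := ih (j+1) (by omega)
    have h2 := gap_mono n a hconv j (j+1) (by omega) (by omega)
    have e1 : j + (L+1) = j+1+L := by ring
    have e2 : j+1+(L+1) = j+1+1+L := by ring
    rw [e1, e2]
    have e3 : j + 1 + 1 + L = j + 2 + L := by ring
    have e4 : (j+1) + 1 = j + 2 := by ring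
    rw [e3]
    rw [e4] at h1 h2
    linarith

lemma diff_mono (n : ℕ) (a : ℕ → ℝ)
    (hconv : ∀ i, i + 2 < n → a (i+1) - a i < a (i+2) - a (i+1)) :
    ∀ L, 1 ≤ L → ∀ j j', j < j' → j' + L < n → a (j+L) - a j < a (j'+L) - a j' := by
  intro L hL j j' hjj' hj'
  induction j' with
  | zero => omega
  | succ m ih =>
    have hstep : a (m+L) - a m < a (m+1+L) - a (m+1) :=
      diff_shift n a hconv L hL m (by omega)
    rcases Nat.lt_or_ge j m with h | h
    · have := ih h (by omega)
      linarith
    · obtain rfl : j = m := by omega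
      exact hstep

lemma key_count (n : ℕ) (a : ℕ → ℝ)
    (hmono : ∀ i j, i < j → j < n → a i < a j)
    (hconv : ∀ i, i + 2 < n → a (i+1) - a i < a (i+2) - a (i+1))
    (d : ℝ) (hd : 0 < d) :
    2 * ((Finset.range n ×ˢ Finset.range n).filter
      (fun p => p.1 < p.2 ∧ a p.2 - a p.1 = d)).card ≤ n := by
  set T := (Finset.range n ×ˢ Finset.range n).filter
      (fun p => p.1 < p.2 ∧ a p.2 - a p.1 = d) with hT
  have hmemT : ∀ p ∈ T, p.1 < n ∧ p.2 < n ∧ p.1 < p.2 ∧ a p.2 - a p.1 = d := by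
    intro p hp
    simp only [hT, Finset.mem_filter, Finset.mem_product, Finset.mem_range] at hp
    tauto
  have hainj : ∀ i j, i < n → j < n → a i = a j → i = j := by
    intro i j hi hj hij
    by_contra h
    rcases Nat.lt_or_ge i j with h' | h'
    · exact absurd hij (ne_of_lt (hmono i j h' hj))
    · exact absurd hij.symm (ne_of_lt (hmono j i (by omega) hi))
  have hfst : ∀ p ∈ T, ∀ q ∈ T, p.1 = q.1 → p = q := by
    intro p hp q hq h
    obtain ⟨hp1, hp2, hp3, hp4⟩ := hmemT p hp
    obtain ⟨hq1, hq2, hq3, hq4⟩ := hmemT q hq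
    have ha1 : a p.1 = a q.1 := by rw [h]
    have : a p.2 = a q.2 := by linarith
    exact Prod.ext h (hainj p.2 q.2 hp2 hq2 this)
  have hlen : ∀ p ∈ T, ∀ q ∈ T, p.1 < q.1 → q.2 - q.1 < p.2 - p.1 := by
    intro p hp q hq h
    obtain ⟨hp1, hp2, hp3, hp4⟩ := hmemT p hp
    obtain ⟨hq1, hq2, hq3, hq4⟩ := hmemT q hq
    by_contra hcon
    push_neg at hcon
    set L := p.2 - p.1 with hL
    have hL1 : 1 ≤ L := by omega
    have h1 : a (p.1 + L) - a p.1 < a (q.1 + L) - a q.1 :=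
      diff_mono n a hconv L hL1 p.1 q.1 h (by omega)
    have h2 : a (q.1 + L) ≤ a q.2 := by
      rcases Nat.lt_or_ge (q.1 + L) q.2 with h' | h'
      · exact le_of_lt (hmono _ _ h' hq2)
      · have e : q.1 + L = q.2 := by omega
        rw [e]
    have e : p.1 + L = p.2 := by omega
    rw [e] at h1
    linarith
  have hge : ∀ p ∈ T, T.card ≤ p.2 := by
    intro p hp
    obtain ⟨hp1, hp2, hp3, hp4⟩ := hmemT p hp
    have hsplit := Finset.card_filter_add_card_filter_not
      (s := T) (p := fun q => q.1 < p.1)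
    have hc1 : (T.filter (fun q => q.1 < p.1)).card ≤ p.1 := by
      have h : (T.filter (fun q => q.1 < p.1)).card ≤ (Finset.range p.1).card := by
        apply Finset.card_le_card_of_injOn (fun q : ℕ × ℕ => q.1)
        · intro q hq
          simp only [Finset.mem_coe, Finset.mem_filter] at hq
          simpa using hq.2
        · intro q hq q' hq' hqq'
          simp only [Finset.coe_filter, Set.mem_setOf_eq] at hq hq'
          exact hfst q hq.1 q' hq'.1 hqq'
      simpa using h
    have hc2 : (T.filter (fun q => ¬ q.1 < p.1)).card ≤ p.2 - p.1 := by
      have h : (T.filter (fun q => ¬ q.1 < p.1)).card ≤ (Finset.Icc 1 (p.2 - p.1)).card := by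
        apply Finset.card_le_card_of_injOn (fun q : ℕ × ℕ => q.2 - q.1)
        · intro q hq
          simp only [Finset.mem_coe, Finset.mem_filter, not_lt] at hq
          obtain ⟨hqT, hq1⟩ := hq
          obtain ⟨hq1', hq2', hq3', hq4'⟩ := hmemT q hqT
          simp only [Finset.mem_coe, Finset.mem_Icc]
          refine ⟨by omega, ?_⟩
          rcases Nat.lt_or_ge p.1 q.1 with h' | h'
          · exact le_of_lt (hlen p hp q hqT h')
          · have e : q.1 = p.1 := by omega
            have e2 := hfst q hqT p hp e
            rw [e2]
        · intro q hq q' hq' hqq'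
          simp only [Finset.coe_filter, Set.mem_setOf_eq, not_lt] at hq hq'
          simp only at hqq'
          by_contra hne
          have h1 : q.1 ≠ q'.1 := fun h => hne (hfst q hq.1 q' hq'.1 h)
          rcases Nat.lt_or_ge q.1 q'.1 with h' | h'
          · have := hlen q hq.1 q' hq'.1 h'; omega
          · have := hlen q' hq'.1 q hq.1 (by omega); omega
      rw [Nat.card_Icc] at h
      omega
    omega
  rcases Finset.eq_empty_or_nonempty T with h | ⟨p, hp⟩
  · simp [h]
  · have hinj : T.card ≤ (Finset.Ico T.card n).card := by
      apply Finset.card_le_card_of_injOn (fun q : ℕ × ℕ => q.2)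
      · intro q hq
        obtain ⟨_, hq2, _, _⟩ := hmemT q hq
        simp only [Finset.mem_coe, Finset.mem_Ico]
        exact ⟨hge q hq, hq2⟩
      · intro q hq q' hq' hqq'
        simp only [Finset.mem_coe] at hq hq'
        simp only at hqq'
        obtain ⟨hq1, hq2, hq3, hq4⟩ := hmemT q hq
        obtain ⟨hq1', hq2', hq3', hq4'⟩ := hmemT q' hq'
        have e : a q.2 = a q'.2 := by rw [hqq']
        have : a q.1 = a q'.1 := by linarith
        exact hfst q hq q' hq' (hainj q.1 q'.1 hq1 hq1' this)
    rw [Nat.card_Ico] at hinj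
    omega

/-- For any convex set `A ⊂ ℝ` and any `d ≠ 0`, we have `r_{A-A}(d) ≤ ⌊|A|/2⌋`. -/
theorem repDiff_le_half_card (A : Finset ℝ) (hA : IsConvexSet A) (d : ℝ) (hd : d ≠ 0) :
    repDiff A d ≤ A.card / 2 := by
  have main : ∀ e : ℝ, 0 < e → repDiff A e ≤ A.card / 2 := by
    intro e he
    set l := A.sort (· ≤ ·) with hl
    set n := l.length with hn
    set a : ℕ → ℝ := fun i => l.getD i 0 with ha
    have hsorted : l.Pairwise (· < ·) := List.sortedLT_iff_pairwise.1 A.sortedLT_sort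
    have hget : ∀ i (h : i < n), a i = l.get ⟨i, h⟩ := by
      intro i h
      show l.getD i 0 = l.get ⟨i, h⟩
      rw [List.getD_eq_getElem l 0 h, List.get_eq_getElem]
    have hmono : ∀ i j, i < j → j < n → a i < a j := by
      intro i j hij hj
      rw [hget i (by omega), hget j hj]
      exact (List.sortedLT_iff_pairwise.2 hsorted).strictMono_get (by exact hij)
    have hconv : ∀ i, i + 2 < n → a (i+1) - a i < a (i+2) - a (i+1) := by
      intro i h
      have := hA i h
      rw [hget (i+1) (by omega), hget i (by omega), hget (i+2) h]
      exact this
    have hmemA : ∀ i, i < n → a i ∈ A := by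
      intro i h
      rw [hget i h]
      exact (Finset.mem_sort _).1 (List.get_mem l ⟨i, h⟩)
    have hcard : repDiff A e = ((Finset.range n ×ˢ Finset.range n).filter
        (fun p => p.1 < p.2 ∧ a p.2 - a p.1 = e)).card := by
      rw [repDiff]
      refine (Finset.card_bij (fun (p : ℕ × ℕ) _ => (a p.2, a p.1)) ?_ ?_ ?_).symm
      · intro p hp
        simp only [Finset.mem_filter, Finset.mem_product, Finset.mem_range] at hp ⊢
        exact ⟨⟨hmemA p.2 hp.1.2, hmemA p.1 hp.1.1⟩, hp.2.2⟩
      · intro p hp q hq hpq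
        simp only [Finset.mem_filter, Finset.mem_product, Finset.mem_range] at hp hq
        have e1 : a p.2 = a q.2 := congrArg Prod.fst hpq
        have e2 : a p.1 = a q.1 := congrArg Prod.snd hpq
        have hinj : ∀ i j, i < n → j < n → a i = a j → i = j := by
          intro i j hi hj hij
          by_contra h
          rcases Nat.lt_or_ge i j with h' | h'
          · exact absurd hij (ne_of_lt (hmono i j h' hj))
          · exact absurd hij.symm (ne_of_lt (hmono j i (by omega) hi))
        exact Prod.ext (hinj _ _ hp.1.1 hq.1.1 e2) (hinj _ _ hp.1.2 hq.1.2 e1)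
      · intro b hb
        simp only [Finset.mem_filter, Finset.mem_product] at hb
        obtain ⟨⟨hb1, hb2⟩, hb3⟩ := hb
        have hx : b.1 ∈ l := (Finset.mem_sort _).2 hb1
        have hy : b.2 ∈ l := (Finset.mem_sort _).2 hb2
        set i := l.idxOf b.1 with hi
        set j := l.idxOf b.2 with hj
        have hin : i < n := List.idxOf_lt_length_iff.2 hx
        have hjn : j < n := List.idxOf_lt_length_iff.2 hy
        have hai : a i = b.1 := by rw [hget i hin]; exact List.idxOf_get _
        have haj : a j = b.2 := by rw [hget j hjn]; exact List.idxOf_get _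
        have hji : j < i := by
          by_contra h
          push_neg at h
          have : b.1 ≤ b.2 := by
            rcases Nat.lt_or_ge i j with h' | h'
            · rw [← hai, ← haj]; exact le_of_lt (hmono i j h' hjn)
            · have : i = j := by omega
              rw [← hai, ← haj, this]
          linarith
        refine ⟨(j, i), ?_, ?_⟩
        · simp only [Finset.mem_filter, Finset.mem_product, Finset.mem_range]
          exact ⟨⟨hjn, hin⟩, hji, by rw [hai, haj]; linarith⟩
        · show (a i, a j) = b
          exact Prod.ext hai haj
      done
    have hkey := key_count n a hmono hconv e he
    have hnA : n = A.card := Finset.length_sort _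
    omega
  rcases lt_trichotomy d 0 with h | h | h
  · have hswap : repDiff A d = repDiff A (-d) := by
      rw [repDiff, repDiff]
      apply Finset.card_bij (fun (p : ℝ × ℝ) _ => (p.2, p.1))
      · intro p hp
        simp only [Finset.mem_filter, Finset.mem_product] at hp ⊢
        refine ⟨⟨hp.1.2, hp.1.1⟩, by linarith [hp.2]⟩
      · intro p hp q hq hpq
        have e1 : p.2 = q.2 := congrArg Prod.fst hpq
        have e2 : p.1 = q.1 := congrArg Prod.snd hpq
        exact Prod.ext e2 e1
      · intro b hb
        simp only [Finset.mem_filter, Finset.mem_product] at hb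
        refine ⟨(b.2, b.1), ?_, rfl⟩
        simp only [Finset.mem_filter, Finset.mem_product]
        exact ⟨⟨hb.1.2, hb.1.1⟩, by linarith [hb.2]⟩
    rw [hswap]
    exact main (-d) (by linarith)
  · exact absurd h hd
  · exact main d h
end

section
/- Let A = {a_1 < a_2 < ... < a_n} be a convex set in ℝ, and suppose a real number d has two representations d = a_{j+k} - a_j = a_{j'+k'} - a_{j'} with integers k > k' ≥ 1 and valid indices (j + k ≤ n and j' + k' ≤ n). Then j' ≥ j + 2. -/
/-!
Convexity says the consecutive differences `a (i + 1) - a i` increase, so a difference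
`a (p + m) - a p` over a window of fixed length `m` grows as the window moves right. If `j' ≤ j + 1`,
then `j' ≤ j + k - k'`, hence `a (j' + k') - a j' ≤ a (j + k) - a (j + k - k')`, and the right-hand
side is strictly less than `a (j + k) - a j` because `a` is increasing.
-/

open Set

theorem sub_le_sub_of_monotoneOn_sub {α : Type*} [AddCommGroup α] [PartialOrder α]
    [IsOrderedAddMonoid α] {a : ℕ → α} {l n : ℕ}
    (hgap : MonotoneOn (fun i ↦ a (i + 1) - a i) (Ico l n))
    {p q m : ℕ} (hp : l ≤ p) (hpq : p ≤ q) (hq : q + m ≤ n) :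
    a (p + m) - a p ≤ a (q + m) - a q := by
  have htel (r : ℕ) : ∑ i ∈ Finset.range m, (a (r + i + 1) - a (r + i)) = a (r + m) - a r :=
    Finset.sum_range_sub (fun i ↦ a (r + i)) m
  rw [← htel p, ← htel q]
  refine Finset.sum_le_sum fun i hi ↦ ?_
  have hi : i < m := Finset.mem_range.mp hi
  exact hgap ⟨by omega, by omega⟩ ⟨by omega, by omega⟩ (by omega)

theorem convex_claim_index_gap_general (n : ℕ) (a : ℕ → ℝ)
    (hmono : ∀ i, 1 ≤ i → i < n → a i < a (i + 1))
    (hconv : ∀ i, 2 ≤ i → i ≤ n - 1 → a i - a (i - 1) < a (i + 1) - a i)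
    (d : ℝ) (j j' k k' : ℕ)
    (hkk' : k' < k)
    (hj : 1 ≤ j) (hj' : 1 ≤ j')
    (hjk : j + k ≤ n) (hj'k' : j' + k' ≤ n)
    (hd : a (j + k) - a j = d) (hd' : a (j' + k') - a j' = d) :
    j + 2 ≤ j' := by
  have hstrict : StrictMonoOn a (Icc 1 n) :=
    strictMonoOn_of_lt_add_one ordConnected_Icc fun i _ ⟨hi, _⟩ ⟨_, hi'⟩ ↦ hmono i hi hi'
  have hgap : MonotoneOn (fun i ↦ a (i + 1) - a i) (Ico 1 n) :=
    monotoneOn_of_le_add_one ordConnected_Ico fun i _ ⟨hi, _⟩ ⟨_, hi'⟩ ↦ by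
      simpa using (hconv (i + 1) (by omega) (by omega)).le
  by_contra! hj'j
  have hwindow :=
    sub_le_sub_of_monotoneOn_sub hgap hj' (q := j + k - k') (m := k') (by omega) (by omega)
  rw [Nat.sub_add_cancel (by omega)] at hwindow
  have hshort : a j < a (j + k - k') := hstrict ⟨hj, by omega⟩ ⟨by omega, by omega⟩ (by omega)
  linarith

/-- If `A = {a_1 < ... < a_n}` is convex and `d = a_{j+k} - a_j = a_{j'+k'} - a_{j'}`
with `k > k' ≥ 1`, `j + k ≤ n` and `j' + k' ≤ n`, then `j' ≥ j + 2`. -/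
theorem convex_claim_index_gap (n : ℕ) (a : ℕ → ℝ)
    (hmono : ∀ i, 1 ≤ i → i < n → a i < a (i + 1))
    (hconv : ∀ i, 2 ≤ i → i ≤ n - 1 → a i - a (i - 1) < a (i + 1) - a i)
    (d : ℝ) (j j' k k' : ℕ)
    (hk' : 1 ≤ k') (hkk' : k' < k)
    (hj : 1 ≤ j) (hj' : 1 ≤ j')
    (hjk : j + k ≤ n) (hj'k' : j' + k' ≤ n)
    (hd : a (j + k) - a j = d) (hd' : a (j' + k') - a j' = d) :
    j + 2 ≤ j' :=
  convex_claim_index_gap_general n a hmono hconv d j j' k k' hkk' hj hj' hjk hj'k' hd hd'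
end

section
/- Let m ≥ 3 be an integer and let δ be a real number with 0 < δ < 1/(m-2). Define a_k := (k-1) + δ(k-2)(k-1)/2 for 1 ≤ k ≤ m+1, and then iteratively a_{m+1+i} := a_{1+2i} + a_{m+1} for 1 ≤ i ≤ m-1. Then the sequence a_1, a_2, ..., a_{2m} is strictly increasing and the set A = {a_1, ..., a_{2m}} is convex, i.e., a_{i+1} - a_i > a_i - a_{i-1} for all 2 ≤ i ≤ 2m-1; in particular |A| = 2m. -/
/-!
Write `d k = a (k + 1) - a k`. On `[1, m]` the differences are `1 + δ (k - 1)`, strictly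
increasing, and the recursion gives `d (m + i) = d (2i - 1) + d (2i)`. The first new difference
`d (m + 1) = d 1 + d 2 = 2 + δ` exceeds `d m = 1 + δ (m - 1)` exactly because `δ (m - 2) < 1`;
after that each `d (m + i)` is a sum of two earlier differences that have each moved two steps
up, so monotonicity propagates by induction. Positive, strictly increasing differences give
both the monotonicity of `a` and the convexity of `A`.
-/

open Set fwdDiff

lemma strictMonoOn_Icc_of_lt_add_one {β : Type*} [Preorder β] {f : ℕ → β} {p q : ℕ}
    (h : ∀ k, p ≤ k → k < q → f k < f (k + 1)) : StrictMonoOn f (Icc p q) :=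
  strictMonoOn_of_lt_add_one ordConnected_Icc fun k _ hk hk1 => h k hk.1 (by grind)

theorem strictMonoOn_Icc_of_pairSum_recursion {α : Type*} [AddCommMonoid α] [PartialOrder α]
    [IsOrderedCancelAddMonoid α] {d : ℕ → α} {m : ℕ} (hmono : StrictMonoOn d (Icc 1 m))
    (hjump : d m < d 1 + d 2)
    (hrec : ∀ i, i + 2 ≤ m → d (m + i + 1) = d (2 * i + 1) + d (2 * i + 2)) :
    StrictMonoOn d (Icc 1 (2 * m - 1)) := by
  have hprefix : ∀ i, i ≤ m - 1 → StrictMonoOn d (Icc 1 (m + i)) := by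
    intro i
    induction i with
    | zero => exact fun _ => hmono
    | succ i ih =>
      intro hi
      have ih := ih (by omega)
      refine strictMonoOn_Icc_of_lt_add_one fun k hk1 hk => ?_
      obtain hk | rfl : k < m + i ∨ k = m + i := by omega
      · exact ih ⟨hk1, by omega⟩ ⟨by omega, by omega⟩ (by omega)
      obtain _ | j := i
      · simpa [hrec 0 (by omega)] using hjump
      · rw [hrec (j + 1) (by omega), ← add_assoc, hrec j (by omega)]
        exact add_lt_add (ih ⟨by omega, by omega⟩ ⟨by omega, by omega⟩ (by omega))
          (ih ⟨by omega, by omega⟩ ⟨by omega, by omega⟩ (by omega))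
  exact (hprefix (m - 1) le_rfl).mono (Icc_subset_Icc_right (by omega))

section Construction

variable {m : ℕ} {δ : ℝ} {a : ℕ → ℝ}

lemma fwdDiff_eq_of_quadratic
    (ha1 : ∀ k, 1 ≤ k → k ≤ m + 1 →
      a k = ((k : ℝ) - 1) + δ * ((k : ℝ) - 2) * ((k : ℝ) - 1) / 2)
    (k : ℕ) (hk1 : 1 ≤ k) (hkm : k ≤ m) : Δ_[1] a k = 1 + δ * ((k : ℝ) - 1) := by
  rw [fwdDiff, ha1 k hk1 (by omega), ha1 (k + 1) (by omega) (by omega)]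
  push_cast
  ring

lemma fwdDiff_eq_add_of_recursion (ha_one : a 1 = 0)
    (ha2 : ∀ i, 1 ≤ i → i ≤ m - 1 → a (m + 1 + i) = a (1 + 2 * i) + a (m + 1))
    {i : ℕ} (hi : i + 2 ≤ m) :
    Δ_[1] a (m + i + 1) = Δ_[1] a (2 * i + 1) + Δ_[1] a (2 * i + 2) := by
  have hext : ∀ j, j ≤ m - 1 → a (m + 1 + j) = a (1 + 2 * j) + a (m + 1) := by
    intro j hj
    rcases j.eq_zero_or_pos with rfl | hj1
    · simp [ha_one]
    · exact ha2 j hj1 hj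
  simp only [fwdDiff]
  rw [show m + i + 1 + 1 = m + 1 + (i + 1) by ring, show m + i + 1 = m + 1 + i by ring,
    hext (i + 1) (by omega), hext i (by omega)]
  ring_nf

end Construction

/-- The explicit construction: with `m ≥ 3`, `0 < δ < 1/(m-2)`,
`a_k = (k-1) + δ(k-2)(k-1)/2` for `1 ≤ k ≤ m+1` and
`a_{m+1+i} = a_{1+2i} + a_{m+1}` for `1 ≤ i ≤ m-1`, the sequence
`a_1, ..., a_{2m}` is strictly increasing and convex; in particular the
set `A = {a_1, ..., a_{2m}}` has cardinality `2m`. -/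
theorem construction_is_convex (m : ℕ) (hm : 3 ≤ m) (δ : ℝ)
    (hδ0 : 0 < δ) (hδ : δ < 1 / ((m : ℝ) - 2)) (a : ℕ → ℝ)
    (ha1 : ∀ k, 1 ≤ k → k ≤ m + 1 →
      a k = ((k : ℝ) - 1) + δ * ((k : ℝ) - 2) * ((k : ℝ) - 1) / 2)
    (ha2 : ∀ i, 1 ≤ i → i ≤ m - 1 → a (m + 1 + i) = a (1 + 2 * i) + a (m + 1)) :
    (∀ i, 1 ≤ i → i < 2 * m → a i < a (i + 1)) ∧
      (∀ i, 2 ≤ i → i ≤ 2 * m - 1 → a i - a (i - 1) < a (i + 1) - a i) ∧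
      ((Finset.Icc 1 (2 * m)).image a).card = 2 * m := by
  have hd := fwdDiff_eq_of_quadratic ha1
  have hm3 : (3 : ℝ) ≤ m := by exact_mod_cast hm
  have hδm : δ * ((m : ℝ) - 2) < 1 := by rwa [lt_div_iff₀ (by linarith)] at hδ
  have hmono : StrictMonoOn (Δ_[1] a) (Icc 1 (2 * m - 1)) := by
    refine strictMonoOn_Icc_of_pairSum_recursion ?_ ?_
      fun i hi => fwdDiff_eq_add_of_recursion (by simpa using ha1 1 le_rfl (by omega)) ha2 hi
    · intro j hj k hk hjk
      rw [hd j hj.1 hj.2, hd k hk.1 hk.2]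
      gcongr
    · rw [hd m (by omega) le_rfl, hd 1 le_rfl (by omega), hd 2 (by omega) (by omega)]
      push_cast
      linarith
  have hinc : ∀ i, 1 ≤ i → i < 2 * m → a i < a (i + 1) := fun i hi1 hi2 => sub_pos.mp <|
    calc (0 : ℝ) < Δ_[1] a 1 := by rw [hd 1 le_rfl (by omega)]; norm_num
      _ ≤ Δ_[1] a i := hmono.monotoneOn ⟨le_rfl, by omega⟩ ⟨hi1, by omega⟩ hi1
  refine ⟨hinc, fun i hi1 hi2 => ?_, ?_⟩
  · have := hmono ⟨(by omega : 1 ≤ i - 1), by omega⟩ ⟨by omega, hi2⟩ (by omega : i - 1 < i)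
    simpa [fwdDiff, Nat.sub_add_cancel (by omega : 1 ≤ i)] using this
  · rw [Finset.card_image_of_injOn, Nat.card_Icc, Nat.add_sub_cancel]
    simpa using (strictMonoOn_Icc_of_lt_add_one fun k hk1 hk2 => hinc k hk1 hk2).injOn
end

section
/- For all natural numbers m ≥ 1 and ℓ ≥ 1, there exists a convex set A ⊆ ℝ of cardinality 2mℓ and ℓ pairwise distinct non-zero real numbers d_1, ..., d_ℓ such that r_{A-A}(d_i) ≥ m for every 1 ≤ i ≤ ℓ; in particular, |{d ≠ 0 : r_{A-A}(d) ≥ m}| ≥ |A|/(2m). -/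
open Pointwise

namespace MR

def d0 (m : ℕ) : ℕ := m * (3 * m + 1)

def f (m : ℕ) : ℕ → ℕ
  | j =>
    if j ≤ m then j * (2 * m + j + 1)
    else if _h : j < 2 * m then d0 m + f m (2 * j - 2 * m)
    else 0
  decreasing_by omega

def gN (m : ℕ) : ℕ → ℕ
  | j =>
    if j < m then 2 * m + 2 * j + 2
    else if _h : j + 1 < 2 * m then gN m (2 * j - 2 * m) + gN m (2 * j - 2 * m + 1)
    else 0
  decreasing_by all_goals omega

lemma f_base (m j : ℕ) (h : j ≤ m) : f m j = j * (2 * m + j + 1) := by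
  rw [f]; simp [h]

lemma f_zero (m : ℕ) : f m 0 = 0 := by simp [f_base m 0 (by omega)]

lemma f_rec (m j : ℕ) (h1 : m ≤ j) (h2 : j < 2 * m) (hm : 1 ≤ m) :
    f m j = d0 m + f m (2 * j - 2 * m) := by
  rcases eq_or_lt_of_le h1 with rfl | h1
  · rw [f_base m m le_rfl]
    have : 2 * m - 2 * m = 0 := by omega
    rw [this, f_zero]
    simp only [d0, add_zero]; ring
  · rw [f]
    rw [if_neg (by omega), dif_pos h2]

lemma gN_base (m j : ℕ) (h : j < m) : gN m j = 2 * m + 2 * j + 2 := by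
  rw [gN]; simp [h]

lemma gN_rec (m j : ℕ) (h1 : m ≤ j) (h2 : j + 1 < 2 * m) :
    gN m j = gN m (2 * j - 2 * m) + gN m (2 * j - 2 * m + 1) := by
  rw [gN]; rw [if_neg (by omega), dif_pos h2]


lemma f_pair (m i : ℕ) (hm : 1 ≤ m) (h : i < m) :
    f m (m + i) = f m (2 * i) + d0 m := by
  have := f_rec m (m + i) (by omega) (by omega) hm
  have e : 2 * (m + i) - 2 * m = 2 * i := by omega
  rw [e] at this
  omega

lemma gap_eq (m : ℕ) (hm : 1 ≤ m) : ∀ j, j + 2 ≤ 2 * m → f m (j + 1) = f m j + gN m j := by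
  intro j
  induction j using Nat.strong_induction_on with
  | _ j ih =>
    intro hj
    rcases lt_or_ge j m with hc | hc
    · rw [f_base m (j+1) (by omega), f_base m j (by omega), gN_base m j hc]
      ring
    · have e0 : f m j = d0 m + f m (2*j - 2*m) := f_rec m j hc (by omega) hm
      have e1 : f m (j+1) = d0 m + f m (2*j - 2*m + 2) := by
        rw [f_rec m (j+1) (by omega) (by omega) hm]
        congr 2
        omega
      have e2 : f m (2*j - 2*m + 1) = f m (2*j - 2*m) + gN m (2*j - 2*m) :=
        ih (2*j - 2*m) (by omega) (by omega)
      have e3 : f m (2*j - 2*m + 2) = f m (2*j - 2*m + 1) + gN m (2*j - 2*m + 1) :=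
        ih (2*j - 2*m + 1) (by omega) (by omega)
      have e4 : gN m j = gN m (2*j - 2*m) + gN m (2*j - 2*m + 1) :=
        gN_rec m j hc (by omega)
      omega

lemma gN_pos (m : ℕ) (hm : 1 ≤ m) : ∀ j, j + 2 ≤ 2 * m → 0 < gN m j := by
  intro j
  induction j using Nat.strong_induction_on with
  | _ j ih =>
    intro hj
    rcases lt_or_ge j m with hc | hc
    · rw [gN_base m j hc]; omega
    · rw [gN_rec m j hc (by omega)]
      have := ih (2*j - 2*m) (by omega) (by omega)
      omega

lemma gN_mono (m : ℕ) (hm : 1 ≤ m) : ∀ j, j + 3 ≤ 2 * m → gN m j < gN m (j + 1) := by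
  intro j
  induction j using Nat.strong_induction_on with
  | _ j ih =>
    intro hj
    rcases lt_or_ge (j+1) m with hc | hc
    · rw [gN_base m j (by omega), gN_base m (j+1) hc]; omega
    · rcases eq_or_lt_of_le hc with he | hc2
      · -- j + 1 = m, so m ≥ 2
        have hm2 : 2 ≤ m := by omega
        rw [gN_base m j (by omega)]
        rw [gN_rec m (j+1) (by omega) (by omega)]
        have e : 2 * (j+1) - 2 * m = 0 := by omega
        rw [e]
        rw [gN_base m 0 (by omega), gN_base m 1 (by omega)]
        omega
      · -- m ≤ j
        have hcj : m ≤ j := by omega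
        have e4 : gN m j = gN m (2*j - 2*m) + gN m (2*j - 2*m + 1) :=
          gN_rec m j hcj (by omega)
        have e5 : gN m (j+1) = gN m (2*j - 2*m + 2) + gN m (2*j - 2*m + 3) := by
          rw [gN_rec m (j+1) (by omega) (by omega)]
          congr 2 <;> omega
        have i1 : gN m (2*j-2*m) < gN m (2*j-2*m+1) := ih (2*j-2*m) (by omega) (by omega)
        have i2 : gN m (2*j-2*m+1) < gN m (2*j-2*m+2) := ih (2*j-2*m+1) (by omega) (by omega)
        have i3 : gN m (2*j-2*m+2) < gN m (2*j-2*m+3) := ih (2*j-2*m+2) (by omega) (by omega)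
        omega

lemma f_le (m : ℕ) (hm : 1 ≤ m) : ∀ j, j ≤ 2 * m - 1 → f m j ≤ d0 m * j := by
  intro j
  induction j using Nat.strong_induction_on with
  | _ j ih =>
    intro hj
    rcases le_or_gt j m with hc | hc
    · rw [f_base m j hc]
      have h1 : 2 * m + j + 1 ≤ d0 m := by unfold d0; nlinarith
      calc j * (2 * m + j + 1) ≤ j * d0 m := Nat.mul_le_mul_left j h1
        _ = d0 m * j := Nat.mul_comm _ _
    · rw [f_rec m j (by omega) (by omega) hm]
      have := ih (2*j - 2*m) (by omega) (by omega)
      have hd : 1 ≤ d0 m := by unfold d0; nlinarith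
      have : d0 m + d0 m * (2*j - 2*m) ≤ d0 m * j := by
        have e : d0 m + d0 m * (2*j - 2*m) = d0 m * (2*j - 2*m + 1) := by ring
        rw [e]
        exact Nat.mul_le_mul_left _ (by omega)
      omega

def K0 (m : ℕ) : ℕ := 2 * m * d0 m

lemma gN_lt_K (m : ℕ) (hm : 1 ≤ m) (j : ℕ) (hj : j + 2 ≤ 2 * m) : gN m j < K0 m := by
  have h1 := gap_eq m hm j hj
  have h2 : f m (j+1) ≤ d0 m * (j+1) := f_le m hm (j+1) (by omega)
  have hd : 1 ≤ d0 m := by unfold d0; nlinarith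
  have h4 : d0 m * (j + 1) < K0 m := by
    have h5 : d0 m * (j+1) < d0 m * (2*m) :=
      mul_lt_mul_of_pos_left (by omega) (by omega)
    have h6 : K0 m = d0 m * (2*m) := by unfold K0; ring
    omega
  omega


def S0 (m : ℕ) : ℕ → ℕ
  | 0 => 0
  | t + 1 => S0 m t + K0 m ^ t * (f m (2 * m - 1) + K0 m + 2 * m + 2)

def P0 (m J : ℕ) : ℕ := S0 m (J / (2 * m)) + K0 m ^ (J / (2 * m)) * f m (J % (2 * m))

lemma P0_eq (m : ℕ) (hm : 1 ≤ m) (t r : ℕ) (hr : r < 2 * m) :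
    P0 m (2 * m * t + r) = S0 m t + K0 m ^ t * f m r := by
  unfold P0
  have h1 : (2 * m * t + r) / (2 * m) = t := by
    rw [Nat.mul_add_div (by omega), Nat.div_eq_of_lt hr]
    omega
  have h2 : (2 * m * t + r) % (2 * m) = r := by
    rw [Nat.mul_add_mod, Nat.mod_eq_of_lt hr]
  rw [h1, h2]

lemma K0_ge8 (m : ℕ) (hm : 1 ≤ m) : 8 ≤ K0 m := by
  unfold K0 d0
  have h1 : 1 * 4 ≤ m * (3 * m + 1) := Nat.mul_le_mul hm (by omega)
  have h2 : 2 * (1 * 4) ≤ (2 * m) * (m * (3 * m + 1)) :=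
    Nat.mul_le_mul (by omega) h1
  omega

lemma K0_pos (m : ℕ) (hm : 1 ≤ m) : 0 < K0 m := by
  have := K0_ge8 m hm; omega

lemma P0_lt_succ (m : ℕ) (hm : 1 ≤ m) (J : ℕ) : P0 m J < P0 m (J + 1) := by
  obtain ⟨t, r, hJ, hr⟩ : ∃ t r, J = 2 * m * t + r ∧ r < 2 * m :=
    ⟨J / (2 * m), J % (2 * m), by rw [Nat.div_add_mod], Nat.mod_lt _ (by omega)⟩
  subst hJ
  have hKt : 0 < K0 m ^ t := pow_pos (K0_pos m hm) t
  rcases lt_or_ge (r + 1) (2 * m) with hc | hc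
  · have e1 : 2 * m * t + r + 1 = 2 * m * t + (r + 1) := by omega
    rw [e1, P0_eq m hm t r hr, P0_eq m hm t (r+1) hc]
    have hf : f m r < f m (r + 1) := by
      have := gap_eq m hm r (by omega)
      have := gN_pos m hm r (by omega)
      omega
    have := mul_lt_mul_of_pos_left hf hKt
    omega
  · have hr1 : r = 2 * m - 1 := by omega
    have e1 : 2 * m * t + r + 1 = 2 * m * (t + 1) + 0 := by
      have h : r + 1 = 2 * m := by omega
      rw [Nat.add_assoc, h]; ring
    rw [e1, P0_eq m hm t r hr, P0_eq m hm (t+1) 0 (by omega), f_zero]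
    show S0 m t + K0 m ^ t * f m r < S0 m (t+1) + K0 m ^ (t+1) * 0
    rw [S0]
    have hfb : f m r ≤ f m (2*m-1) := by rw [hr1]
    have : K0 m ^ t * f m r < K0 m ^ t * (f m (2*m-1) + K0 m + 2*m + 2) := by
      apply mul_lt_mul_of_pos_left _ hKt
      have := K0_pos m hm
      omega
    omega

lemma P0_convex (m : ℕ) (hm : 1 ≤ m) (J : ℕ) :
    2 * P0 m (J + 1) < P0 m J + P0 m (J + 2) := by
  obtain ⟨t, r, hJ, hr⟩ : ∃ t r, J = 2 * m * t + r ∧ r < 2 * m :=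
    ⟨J / (2 * m), J % (2 * m), by rw [Nat.div_add_mod], Nat.mod_lt _ (by omega)⟩
  subst hJ
  have hKt : 0 < K0 m ^ t := pow_pos (K0_pos m hm) t
  have hK2 : 2 ≤ K0 m := by have := K0_ge8 m hm; omega
  rcases lt_or_ge (r + 2) (2 * m) with hc | hc
  · -- all within a block
    have e1 : 2 * m * t + r + 1 = 2 * m * t + (r + 1) := by omega
    have e2 : 2 * m * t + r + 2 = 2 * m * t + (r + 2) := by omega
    rw [e1, e2, P0_eq m hm t r hr, P0_eq m hm t (r+1) (by omega), P0_eq m hm t (r+2) hc]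
    have g1 := gap_eq m hm r (by omega)
    have g2 : f m (r+2) = f m (r+1) + gN m (r+1) := by
      rw [show r + 2 = r + 1 + 1 by omega]
      exact gap_eq m hm (r+1) (by omega)
    have g3 := gN_mono m hm r (by omega)
    have key : 2 * f m (r+1) < f m r + f m (r+2) := by omega
    have := mul_lt_mul_of_pos_left key hKt
    have expand : K0 m ^ t * (f m r + f m (r+2)) = K0 m ^ t * f m r + K0 m ^ t * f m (r+2) := by ring
    have expand2 : K0 m ^ t * (2 * f m (r+1)) = 2 * (K0 m ^ t * f m (r+1)) := by ring
    omega
  rcases lt_or_ge (r + 1) (2 * m) with hc2 | hc2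
  · -- r = 2m - 2
    have hr2 : r + 2 = 2 * m := by omega
    have e1 : 2 * m * t + r + 1 = 2 * m * t + (r + 1) := by omega
    have e2 : 2 * m * t + r + 2 = 2 * m * (t + 1) + 0 := by
      have h : r + 2 = 2 * m := by omega
      rw [Nat.add_assoc, h]; ring
    rw [e1, e2, P0_eq m hm t r hr, P0_eq m hm t (r+1) (by omega),
      P0_eq m hm (t+1) 0 (by omega), f_zero, S0]
    have hr1 : r + 1 = 2 * m - 1 := by omega
    have g1 := gap_eq m hm r (by omega)
    have gK := gN_lt_K m hm r (by omega)
    have key : 2 * f m (r+1) < f m r + (f m (2*m-1) + K0 m + 2*m + 2) := by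
      rw [← hr1]; omega
    have := mul_lt_mul_of_pos_left key hKt
    have expand : K0 m ^ t * (f m r + (f m (2*m-1) + K0 m + 2*m + 2)) =
        K0 m ^ t * f m r + K0 m ^ t * (f m (2*m-1) + K0 m + 2*m + 2) := by ring
    have expand2 : K0 m ^ t * (2 * f m (r+1)) = 2 * (K0 m ^ t * f m (r+1)) := by ring
    omega
  · -- r = 2m - 1 : connector then first gap of next block
    have hr1 : r = 2 * m - 1 := by omega
    have e1 : 2 * m * t + r + 1 = 2 * m * (t + 1) + 0 := by
      have h : r + 1 = 2 * m := by omega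
      rw [Nat.add_assoc, h]; ring
    have e2 : 2 * m * t + r + 2 = 2 * m * (t + 1) + 1 := by
      have h : r + 2 = 2 * m + 1 := by omega
      rw [Nat.add_assoc, h]; ring
    rw [e1, e2, P0_eq m hm t r hr, P0_eq m hm (t+1) 0 (by omega),
      P0_eq m hm (t+1) 1 (by omega), f_zero, S0]
    have hf1 : f m 1 = 2 * m + 2 := by rw [f_base m 1 hm]; ring
    rw [hf1, hr1]
    -- goal: 2*(S0 t + K^t*(f(2m-1)+K+2m+2) + K^{t+1}*0) < S0 t + K^t*f(2m-1)
    --        + (S0 t + K^t*(f(2m-1)+K+2m+2) + K^{t+1}*(2m+2))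
    have key : K0 m + 2 * m + 2 < K0 m * (2 * m + 2) := by nlinarith
    have h5 : K0 m ^ t * (K0 m + 2*m+2) < K0 m ^ t * (K0 m * (2*m+2)) :=
      mul_lt_mul_of_pos_left key hKt
    have e3 : K0 m ^ (t+1) * (2*m+2) = K0 m ^ t * (K0 m * (2*m+2)) := by ring
    have e4 : K0 m ^ t * (f m (2*m-1) + K0 m + 2*m + 2) =
        K0 m ^ t * f m (2*m-1) + K0 m ^ t * (K0 m + 2*m+2) := by ring
    omega

lemma P0_strictMono (m : ℕ) (hm : 1 ≤ m) : StrictMono (P0 m) :=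
  strictMono_nat_of_lt_succ (P0_lt_succ m hm)

lemma P0_pair (m : ℕ) (hm : 1 ≤ m) (t i : ℕ) (hi : i < m) :
    P0 m (2 * m * t + (m + i)) = P0 m (2 * m * t + 2 * i) + K0 m ^ t * d0 m := by
  rw [P0_eq m hm t (m+i) (by omega), P0_eq m hm t (2*i) (by omega),
    f_pair m i hm hi]
  ring

end MR

/-- For all `m, ℓ ≥ 1` there is a convex set `A ⊆ ℝ` of cardinality `2mℓ` and
`ℓ` pairwise distinct nonzero reals `d_1, ..., d_ℓ` with `r_{A-A}(d_i) ≥ m`;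
in particular, the number of nonzero `d` with `r_{A-A}(d) ≥ m` is at least
`|A|/(2m)`. -/
theorem many_rich_differences (m l : ℕ) (hm : 1 ≤ m) (hl : 1 ≤ l) :
    ∃ A : Finset ℝ, IsConvexSet A ∧ A.card = 2 * m * l ∧
      (∃ d : Fin l → ℝ, Function.Injective d ∧
        ∀ i, d i ≠ 0 ∧ m ≤ repDiff A (d i)) ∧
      (A.card : ℝ) / (2 * m) ≤
        (((A - A).filter fun x => x ≠ 0 ∧ m ≤ repDiff A x).card : ℝ) := by
  classical
  set n := 2 * m * l with hn
  have hinj : Function.Injective (fun J : ℕ => (MR.P0 m J : ℝ)) := by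
    intro a b h
    exact (MR.P0_strictMono m hm).injective (Nat.cast_injective h)
  set A : Finset ℝ := (Finset.range n).map ⟨fun J => (MR.P0 m J : ℝ), hinj⟩ with hA
  have hcard : A.card = 2 * m * l := by rw [hA, Finset.card_map, Finset.card_range]
  have hmem : ∀ J, J < n → (MR.P0 m J : ℝ) ∈ A := fun J hJ =>
    Finset.mem_map.2 ⟨J, Finset.mem_range.2 hJ, rfl⟩
  have hsort : A.sort (· ≤ ·) = (List.range n).map (fun J => (MR.P0 m J : ℝ)) := by
    have hperm : List.Perm (A.sort (· ≤ ·)) ((List.range n).map (fun J => (MR.P0 m J : ℝ))) := by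
      rw [← Multiset.coe_eq_coe, Finset.sort_eq, hA, Finset.map_val, Finset.range_val]
      rfl
    have hs2 : List.Pairwise (· ≤ ·) ((List.range n).map (fun J => (MR.P0 m J : ℝ))) :=
      List.Pairwise.map _
        (fun a b hab => le_of_lt (by exact_mod_cast MR.P0_strictMono m hm hab))
        (List.pairwise_lt_range (n := n))
    exact List.Perm.eq_of_pairwise' (Finset.pairwise_sort _ _) hs2 hperm
  have hlen : (A.sort (· ≤ ·)).length = n := by
    rw [hsort, List.length_map, List.length_range]
  have hget : ∀ (k : ℕ) (hk : k < (A.sort (· ≤ ·)).length),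
      (A.sort (· ≤ ·)).get ⟨k, hk⟩ = (MR.P0 m k : ℝ) := by
    intro k hk
    rw [List.get_eq_getElem]
    simp only [hsort]
    simp
  have hconv : IsConvexSet A := by
    intro i h
    simp only [hget]
    have h1 := MR.P0_convex m hm i
    have h2 : 2 * (MR.P0 m (i+1) : ℝ) < (MR.P0 m i : ℝ) + (MR.P0 m (i+2) : ℝ) := by
      exact_mod_cast h1
    push_cast
    linarith
  -- representation counts
  have hrep : ∀ t : ℕ, t < l → m ≤ repDiff A ((MR.K0 m ^ t * MR.d0 m : ℕ) : ℝ) := by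
    intro t ht
    have hsub : (Finset.range m).image
        (fun k => ((MR.P0 m (2*m*t + (m+k)) : ℝ), (MR.P0 m (2*m*t + 2*k) : ℝ)))
        ⊆ (A ×ˢ A).filter (fun p => p.1 - p.2 = ((MR.K0 m ^ t * MR.d0 m : ℕ) : ℝ)) := by
      intro p hp
      rw [Finset.mem_image] at hp
      obtain ⟨k, hk, rfl⟩ := hp
      rw [Finset.mem_range] at hk
      have hexp : 2*m*(t+1) = 2*m*t + 2*m := by ring
      have hmul : 2*m*(t+1) ≤ 2*m*l := Nat.mul_le_mul_left _ (by omega)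
      rw [Finset.mem_filter, Finset.mem_product]
      refine ⟨⟨hmem _ (by omega), hmem _ (by omega)⟩, ?_⟩
      have hpair := MR.P0_pair m hm t k hk
      show (MR.P0 m (2*m*t + (m+k)) : ℝ) - (MR.P0 m (2*m*t + 2*k) : ℝ) = _
      rw [hpair]
      push_cast
      ring
    have hcardT : ((Finset.range m).image
        (fun k => ((MR.P0 m (2*m*t + (m+k)) : ℝ), (MR.P0 m (2*m*t + 2*k) : ℝ)))).card = m := by
      rw [Finset.card_image_of_injective _ ?_, Finset.card_range]
      intro a b hab
      have h1 : (MR.P0 m (2*m*t + (m+a)) : ℝ) = (MR.P0 m (2*m*t + (m+b)) : ℝ) :=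
        congrArg Prod.fst hab
      have h2 := hinj h1
      omega
    calc m = _ := hcardT.symm
      _ ≤ _ := Finset.card_le_card hsub
  have hK2 : 2 ≤ MR.K0 m := by have := MR.K0_ge8 m hm; omega
  have hd0pos : 0 < MR.d0 m := by unfold MR.d0; nlinarith
  have hdinj : ∀ a b : ℕ, (((MR.K0 m ^ a * MR.d0 m : ℕ) : ℝ) = ((MR.K0 m ^ b * MR.d0 m : ℕ) : ℝ)) → a = b := by
    intro a b hab
    have h1 : MR.K0 m ^ a * MR.d0 m = MR.K0 m ^ b * MR.d0 m := Nat.cast_injective hab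
    have h2 : MR.K0 m ^ a = MR.K0 m ^ b := Nat.eq_of_mul_eq_mul_right hd0pos h1
    exact Nat.pow_right_injective hK2 h2
  have hdne : ∀ t : ℕ, ((MR.K0 m ^ t * MR.d0 m : ℕ) : ℝ) ≠ 0 := by
    intro t
    have : 0 < MR.K0 m ^ t * MR.d0 m := Nat.mul_pos (pow_pos (MR.K0_pos m hm) t) hd0pos
    exact_mod_cast Nat.pos_iff_ne_zero.1 this
  refine ⟨A, hconv, hcard, ⟨fun i => ((MR.K0 m ^ (i : ℕ) * MR.d0 m : ℕ) : ℝ), ?_, ?_⟩, ?_⟩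
  · intro a b hab
    exact Fin.ext (hdinj _ _ hab)
  · intro i
    exact ⟨hdne _, hrep _ i.isLt⟩
  · -- final counting inequality
    have hsubD : (Finset.range l).image (fun t => ((MR.K0 m ^ t * MR.d0 m : ℕ) : ℝ))
        ⊆ (A - A).filter (fun x => x ≠ 0 ∧ m ≤ repDiff A x) := by
      intro x hx
      rw [Finset.mem_image] at hx
      obtain ⟨t, ht, rfl⟩ := hx
      rw [Finset.mem_range] at ht
      rw [Finset.mem_filter]
      refine ⟨?_, hdne t, hrep t ht⟩
      rw [Finset.mem_sub]
      have hexp : 2*m*(t+1) = 2*m*t + 2*m := by ring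
      have hmul : 2*m*(t+1) ≤ 2*m*l := Nat.mul_le_mul_left _ (by omega)
      refine ⟨(MR.P0 m (2*m*t + (m+0)) : ℝ), hmem _ (by omega),
        (MR.P0 m (2*m*t + 2*0) : ℝ), hmem _ (by omega), ?_⟩
      have hpair := MR.P0_pair m hm t 0 (by omega)
      rw [hpair]
      push_cast
      ring
    have hcardD : ((Finset.range l).image (fun t => ((MR.K0 m ^ t * MR.d0 m : ℕ) : ℝ))).card = l := by
      rw [Finset.card_image_of_injective _ (fun a b hab => hdinj a b hab), Finset.card_range]
    have hle : (l : ℝ) ≤ (((A - A).filter fun x => x ≠ 0 ∧ m ≤ repDiff A x).card : ℝ) := by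
      have := Finset.card_le_card hsubD
      rw [hcardD] at this
      exact_mod_cast this
    rw [hcard]
    have h2m : (0 : ℝ) < 2 * m := by positivity
    rw [div_le_iff₀ h2m]
    push_cast
    nlinarith [hle, h2m]
end
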